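/- Let k ≥ 2, d ≥ 1, and let S be a training set with each ‖x_i‖_∞ ≤ 1 and training loss L. Let F, F̄ ⊆ {1,…,d} with F̄ ∖ F ≠ ∅. Suppose W minimizes L over {V : supp(V) ⊆ F} and W★ minimizes L over {V : supp(V) ⊆ F̄} (both minimizers assumed to exist), and suppose L(W) > L(W★). Let j be any index maximizing ‖∇_i L(W)‖_1 over i ∈ {1,…,d}. Then there exists u ∈ ℝ^k such that L(W + u e_jᵀ) ≤ L(W) − (L(W) − L(W★))² / (4 (Σ_{i ∈ F̄∖F} ‖W★_{·,i}‖_∞)²). -/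

import Mathlib

/-!
Along a line `t ↦ W + t • V` the training loss is an average of log-sum-exp functions, whose
second derivative is the variance of the direction under a softmax distribution: it is
nonnegative, and at most `c ^ 2` when every `V x_i` has sup norm at most `c`.

Convexity, together with the vanishing of the gradient columns indexed by `F`, gives
`L(W) - L(W★) ≤ -DL(W)(W★ - W) ≤ B * G`, where `B = ∑_{i ∈ F̄ \ F} ‖W★_{·,i}‖_∞` and
`G = ‖∇_j L(W)‖_1` is the largest column `ℓ₁`-norm of the gradient. Smoothness shows that
moving column `j` by `-(G / 2) • sign (∇_j L(W))` lowers `L` by at least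
`G ^ 2 / 2 - G ^ 2 / 4 = G ^ 2 / 4 ≥ (L(W) - L(W★)) ^ 2 / (4 * B ^ 2)`.
-/

open scoped BigOperators

noncomputable section

/-- The multiclass logistic loss for label `y`. -/
def mcLoss (k : ℕ) (y : Fin k) (v : Fin k → ℝ) : ℝ :=
  Real.log (∑ y' : Fin k, Real.exp ((if y' ≠ y then (1 : ℝ) else 0) - v y + v y'))

/-- The average training loss of the matrix `W` (viewed as `Fin k → Fin d → ℝ`). -/
def trainLoss (k d m : ℕ) (x : Fin m → Fin d → ℝ) (y : Fin m → Fin k)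
    (W : Fin k → Fin d → ℝ) : ℝ :=
  (1 / (m : ℝ)) * ∑ i : Fin m, mcLoss k (y i) (fun q => ∑ j : Fin d, W q j * x i j)

/-- The `r`-th column of the gradient matrix of `L` at `W`. -/
def gradCol (k d : ℕ) (L : (Fin k → Fin d → ℝ) → ℝ) (W : Fin k → Fin d → ℝ)
    (r : Fin d) : Fin k → ℝ :=
  fun q => fderiv ℝ L W (fun q' j' => if q' = q ∧ j' = r then (1 : ℝ) else 0)

open Finset Real Matrix

section LogSumExp

variable {ι : Type*} [Fintype ι] (a b : ι → ℝ)

/-- The derivatives of `t ↦ log (∑ i, exp (a i + t * b i))` are rational in these moments. -/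
def expMoment (n : ℕ) (t : ℝ) : ℝ := ∑ i, b i ^ n * exp (a i + t * b i)

def softmaxMean (t : ℝ) : ℝ := expMoment a b 1 t / expMoment a b 0 t

def softmaxVar (t : ℝ) : ℝ := expMoment a b 2 t / expMoment a b 0 t - softmaxMean a b t ^ 2

lemma hasDerivAt_expMoment (n : ℕ) (t : ℝ) :
    HasDerivAt (expMoment a b n) (expMoment a b (n + 1) t) t := by
  refine HasDerivAt.fun_sum fun i _ => ?_
  have := (((hasDerivAt_id t).mul_const (b i)).const_add (a i)).exp.const_mul (b i ^ n)
  exact this.congr_deriv (by simp only [id_eq, one_mul, pow_succ]; ring)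

lemma expMoment_zero_pos [Nonempty ι] (t : ℝ) : 0 < expMoment a b 0 t :=
  Finset.sum_pos (fun i _ => by simpa using exp_pos _) univ_nonempty

lemma hasDerivAt_log_expMoment_zero [Nonempty ι] (t : ℝ) :
    HasDerivAt (fun s => log (expMoment a b 0 s)) (softmaxMean a b t) t :=
  (hasDerivAt_expMoment a b 0 t).log (expMoment_zero_pos a b t).ne'

lemma hasDerivAt_softmaxMean [Nonempty ι] (t : ℝ) :
    HasDerivAt (softmaxMean a b) (softmaxVar a b t) t := by
  have hZ := (expMoment_zero_pos a b t).ne'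
  refine ((hasDerivAt_expMoment a b 1 t).div (hasDerivAt_expMoment a b 0 t) hZ).congr_deriv ?_
  simp only [softmaxVar, softmaxMean]
  field_simp

lemma softmaxVar_nonneg [Nonempty ι] (t : ℝ) : 0 ≤ softmaxVar a b t := by
  have hZ := expMoment_zero_pos a b t
  have hCS : expMoment a b 1 t ^ 2 ≤ expMoment a b 2 t * expMoment a b 0 t :=
    sum_sq_le_sum_mul_sum_of_sq_le_mul _ (fun i _ => by positivity) (fun i _ => by positivity)
      (fun i _ => le_of_eq (by ring))
  rw [softmaxVar, softmaxMean, sub_nonneg, div_pow, div_le_div_iff₀ (by positivity) hZ]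
  nlinarith

lemma softmaxVar_le [Nonempty ι] (t μ c : ℝ) (hb : ∀ i, |b i - μ| ≤ c) :
    softmaxVar a b t ≤ c ^ 2 := by
  have hZ := expMoment_zero_pos a b t
  have hdev : ∑ i, (b i - μ) ^ 2 * exp (a i + t * b i) ≤ c ^ 2 * expMoment a b 0 t := by
    rw [expMoment, mul_sum]
    refine sum_le_sum fun i _ => ?_
    have : (b i - μ) ^ 2 ≤ c ^ 2 := sq_le_sq' (abs_le.1 (hb i)).1 (abs_le.1 (hb i)).2
    simpa using mul_le_mul_of_nonneg_right this (exp_pos _).le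
  have hexpand : ∑ i, (b i - μ) ^ 2 * exp (a i + t * b i) =
      expMoment a b 2 t - 2 * μ * expMoment a b 1 t + μ ^ 2 * expMoment a b 0 t := by
    simp only [expMoment, mul_sum, ← sum_sub_distrib, ← sum_add_distrib]
    exact sum_congr rfl fun i _ => by ring
  have : softmaxVar a b t = (∑ i, (b i - μ) ^ 2 * exp (a i + t * b i)) / expMoment a b 0 t
      - (softmaxMean a b t - μ) ^ 2 := by
    rw [hexpand, softmaxVar, softmaxMean]
    field_simp
    ring
  rw [this]
  nlinarith [sq_nonneg (softmaxMean a b t - μ), (div_le_iff₀ hZ).2 hdev]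

end LogSumExp

section TrainLoss

variable {k d m : ℕ} (x : Fin m → Fin d → ℝ) (y : Fin m → Fin k)

def relScore (l : Fin k) (v : Fin k → ℝ) : Fin k → ℝ := fun q => v q - v l

def mcMargin (l : Fin k) (v : Fin k → ℝ) : Fin k → ℝ :=
  fun q => (if q ≠ l then (1 : ℝ) else 0) + relScore l v q

lemma mcLoss_add_smul (l : Fin k) (v w : Fin k → ℝ) (t : ℝ) :
    mcLoss k l (v + t • w) = log (expMoment (mcMargin l v) (relScore l w) 0 t) := by
  simp only [mcLoss, expMoment, mcMargin, relScore, Pi.add_apply, Pi.smul_apply, smul_eq_mul,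
    pow_zero, one_mul]
  congr 1
  exact sum_congr rfl fun q _ => by ring_nf

lemma trainLoss_eq (W : Fin k → Fin d → ℝ) :
    trainLoss k d m x y W = 1 / m * ∑ i, mcLoss k (y i) (W *ᵥ x i) := rfl

lemma trainLoss_add_smul (W V : Fin k → Fin d → ℝ) (t : ℝ) :
    trainLoss k d m x y (W + t • V) =
      1 / m * ∑ i, mcLoss k (y i) (W *ᵥ x i + t • (V *ᵥ x i)) := by
  rw [trainLoss_eq]
  refine congrArg _ (sum_congr rfl fun i _ => congrArg _ (funext fun q => ?_))
  simp only [mulVec, dotProduct, Pi.add_apply, Pi.smul_apply, smul_eq_mul, add_mul, mul_assoc,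
    sum_add_distrib, mul_sum]

end TrainLoss

section Line

variable {k d m : ℕ} [NeZero k] (x : Fin m → Fin d → ℝ) (y : Fin m → Fin k)

lemma differentiable_mcLoss (l : Fin k) : Differentiable ℝ (mcLoss k l) := fun _ =>
  DifferentiableAt.log (by fun_prop) (sum_pos (fun q _ => exp_pos _) univ_nonempty).ne'

lemma differentiable_trainLoss : Differentiable ℝ (trainLoss k d m x y) := by
  unfold trainLoss
  have := fun i => (differentiable_mcLoss (y i)).comp
    (by fun_prop : Differentiable ℝ fun W : Fin k → Fin d → ℝ => fun q => ∑ j, W q j * x i j)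
  fun_prop

variable (W V : Fin k → Fin d → ℝ)

def lossSlope (t : ℝ) : ℝ :=
  1 / m * ∑ i, softmaxMean (mcMargin (y i) (W *ᵥ x i)) (relScore (y i) (V *ᵥ x i)) t

def lossCurv (t : ℝ) : ℝ :=
  1 / m * ∑ i, softmaxVar (mcMargin (y i) (W *ᵥ x i)) (relScore (y i) (V *ᵥ x i)) t

lemma hasDerivAt_trainLoss_add_smul (t : ℝ) :
    HasDerivAt (fun s => trainLoss k d m x y (W + s • V)) (lossSlope x y W V t) t := by
  simp only [trainLoss_add_smul, mcLoss_add_smul]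
  exact (HasDerivAt.fun_sum fun i _ => hasDerivAt_log_expMoment_zero _ _ t).const_mul _

lemma hasDerivAt_lossSlope (t : ℝ) : HasDerivAt (lossSlope x y W V) (lossCurv x y W V t) t :=
  (HasDerivAt.fun_sum fun _ _ => hasDerivAt_softmaxMean _ _ t).const_mul _

lemma lossCurv_nonneg (t : ℝ) : 0 ≤ lossCurv x y W V t :=
  mul_nonneg (by positivity) (sum_nonneg fun i _ => softmaxVar_nonneg _ _ t)

lemma lossCurv_le {c : ℝ} (hV : ∀ i q, |(V *ᵥ x i) q| ≤ c) (t : ℝ) :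
    lossCurv x y W V t ≤ c ^ 2 := by
  have hvar : ∀ i,
      softmaxVar (mcMargin (y i) (W *ᵥ x i)) (relScore (y i) (V *ᵥ x i)) t ≤ c ^ 2 := fun i =>
    softmaxVar_le _ _ t (-(V *ᵥ x i) (y i)) c fun q => by simpa [relScore] using hV i q
  calc lossCurv x y W V t ≤ 1 / m * ∑ _i : Fin m, c ^ 2 :=
        mul_le_mul_of_nonneg_left (sum_le_sum fun i _ => hvar i) (by positivity)
    _ = (m / m) * c ^ 2 := by
      rw [sum_const, card_univ, Fintype.card_fin, nsmul_eq_mul]; ring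
    _ ≤ c ^ 2 := mul_le_of_le_one_left (sq_nonneg c) (div_self_le_one _)

lemma fderiv_trainLoss_apply : fderiv ℝ (trainLoss k d m x y) W V = lossSlope x y W V 0 :=
  ((differentiable_trainLoss x y W).hasFDerivAt.hasLineDerivAt V).unique
    (hasDerivAt_trainLoss_add_smul x y W V 0)

end Line

lemma add_le_of_hasDerivAt_of_monotone {g g' : ℝ → ℝ} (hg : ∀ t, HasDerivAt g (g' t) t)
    (hg' : Monotone g') : g 0 + g' 0 ≤ g 1 := by
  obtain ⟨c, hc, hslope⟩ := exists_hasDerivAt_eq_slope g g' zero_lt_one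
    (HasDerivAt.continuousOn fun t _ => hg t) fun t _ => hg t
  have := hg' hc.1.le
  rw [hslope] at this
  simp only [sub_zero, div_one] at this
  linarith

lemma le_add_of_hasDerivAt_of_le {g g' g'' : ℝ → ℝ} {C : ℝ} (hg : ∀ t, HasDerivAt g (g' t) t)
    (hg' : ∀ t, HasDerivAt g' (g'' t) t) (hC : ∀ t, g'' t ≤ C) (hC0 : 0 ≤ C) :
    g 1 ≤ g 0 + g' 0 + C := by
  obtain ⟨c, hc, hslope⟩ := exists_hasDerivAt_eq_slope g g' zero_lt_one
    (HasDerivAt.continuousOn fun t _ => hg t) fun t _ => hg t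
  obtain ⟨c', -, hslope'⟩ := exists_hasDerivAt_eq_slope g' g'' hc.1
    (HasDerivAt.continuousOn fun t _ => hg' t) fun t _ => hg' t
  rw [sub_zero, eq_div_iff hc.1.ne'] at hslope'
  simp only [sub_zero, div_one] at hslope
  nlinarith [hC c', hc.1, hc.2]

section Convexity

variable {k d m : ℕ} [NeZero k] (x : Fin m → Fin d → ℝ) (y : Fin m → Fin k)
  (W V : Fin k → Fin d → ℝ)

lemma trainLoss_add_fderiv_le :
    trainLoss k d m x y W + fderiv ℝ (trainLoss k d m x y) W V ≤
      trainLoss k d m x y (W + V) := by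
  have := add_le_of_hasDerivAt_of_monotone (hasDerivAt_trainLoss_add_smul x y W V)
    (monotone_of_hasDerivAt_nonneg (hasDerivAt_lossSlope x y W V) (lossCurv_nonneg x y W V))
  simpa [fderiv_trainLoss_apply] using this

lemma trainLoss_add_le {c : ℝ} (hV : ∀ i q, |(V *ᵥ x i) q| ≤ c) :
    trainLoss k d m x y (W + V) ≤
      trainLoss k d m x y W + fderiv ℝ (trainLoss k d m x y) W V + c ^ 2 := by
  have := le_add_of_hasDerivAt_of_le (hasDerivAt_trainLoss_add_smul x y W V)
    (hasDerivAt_lossSlope x y W V) (lossCurv_le x y W V hV) (sq_nonneg c)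
  simpa [fderiv_trainLoss_apply] using this

end Convexity

section Gradient

variable {k d : ℕ}

lemma fderiv_apply_eq_sum_gradCol (L : (Fin k → Fin d → ℝ) → ℝ) (W V : Fin k → Fin d → ℝ) :
    fderiv ℝ L W V = ∑ r, ∑ q, V q r * gradCol k d L W r q := by
  have hV : V = ∑ r, ∑ q, V q r • fun q' j' => if q' = q ∧ j' = r then (1 : ℝ) else 0 := by
    ext q' j'
    simp [Finset.sum_apply, ite_and]
  conv_lhs => rw [hV]
  simp only [map_sum, map_smul, smul_eq_mul, gradCol]

lemma gradCol_eq_zero_of_isMinOn {L : (Fin k → Fin d → ℝ) → ℝ} {W : Fin k → Fin d → ℝ}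
    (hL : DifferentiableAt ℝ L W) {F : Finset (Fin d)} (hWsupp : ∀ i ∉ F, ∀ q, W q i = 0)
    (hWmin : ∀ V : Fin k → Fin d → ℝ, (∀ i ∉ F, ∀ q, V q i = 0) → L W ≤ L V)
    {r : Fin d} (hr : r ∈ F) (q : Fin k) : gradCol k d L W r q = 0 := by
  refine IsMinOn.hasLineDerivAt_eq_zero
    (s := {V : Fin k → Fin d → ℝ | ∀ i ∉ F, ∀ q, V q i = 0}) hWmin
    (hL.hasFDerivAt.hasLineDerivAt _) (Filter.Eventually.of_forall ?_)
  intro t i hi q'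
  have : i ≠ r := fun h => hi (h ▸ hr)
  simp [hWsupp i hi, this]

end Gradient

lemma sum_mul_le_norm_mul_sum_abs {ι : Type*} [Fintype ι] (a b : ι → ℝ) :
    ∑ i, a i * b i ≤ ‖a‖ * ∑ i, |b i| := by
  rw [mul_sum]
  refine sum_le_sum fun i _ => ?_
  calc a i * b i ≤ |a i| * |b i| := by rw [← abs_mul]; exact le_abs_self _
    _ ≤ ‖a‖ * |b i| := mul_le_mul_of_nonneg_right (norm_le_pi_norm a i) (abs_nonneg _)

lemma sq_div_sq_le_sq_of_le_mul {a b c : ℝ} (ha : 0 ≤ a) (hb : 0 ≤ b) (h : a ≤ b * c) :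
    a ^ 2 / b ^ 2 ≤ c ^ 2 := by
  rcases hb.eq_or_lt with rfl | hb
  · simp [sq_nonneg]
  rw [← div_pow]
  have hc : 0 ≤ c := nonneg_of_mul_nonneg_right (ha.trans h) hb
  exact pow_le_pow_left₀ (div_nonneg ha hb.le) (div_le_of_le_mul₀ hb.le hc (by linarith)) 2

section KeyLemma

variable {k d m : ℕ} [NeZero k] (x : Fin m → Fin d → ℝ) (y : Fin m → Fin k)

lemma trainLoss_sub_le_sum_norm_mul {F Fbar : Finset (Fin d)} {W W' : Fin k → Fin d → ℝ}
    (hWsupp : ∀ i ∉ F, ∀ q, W q i = 0)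
    (hWmin : ∀ V : Fin k → Fin d → ℝ, (∀ i ∉ F, ∀ q, V q i = 0) →
      trainLoss k d m x y W ≤ trainLoss k d m x y V)
    (hW'supp : ∀ i ∉ Fbar, ∀ q, W' q i = 0) {G : ℝ}
    (hG : ∀ i, ∑ q, |gradCol k d (trainLoss k d m x y) W i q| ≤ G) :
    trainLoss k d m x y W - trainLoss k d m x y W' ≤
      (∑ i ∈ Fbar \ F, ‖fun q => W' q i‖) * G := by
  set g := gradCol k d (trainLoss k d m x y) W
  have hconv := trainLoss_add_fderiv_le x y W (W' - W)
  rw [add_sub_cancel, fderiv_apply_eq_sum_gradCol] at hconv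
  have hsupp : ∑ r, ∑ q, (W' - W) q r * g r q = ∑ r ∈ Fbar \ F, ∑ q, W' q r * g r q := by
    rw [← sum_subset (subset_univ (Fbar \ F))]
    · refine sum_congr rfl fun r hr => sum_congr rfl fun q _ => ?_
      simp [hWsupp r (mem_sdiff.1 hr).2]
    · intro r _ hr
      refine sum_eq_zero fun q _ => ?_
      by_cases hrF : r ∈ F
      · have hL := differentiable_trainLoss x y W
        simp [g, gradCol_eq_zero_of_isMinOn hL hWsupp hWmin hrF]
      · simp [hWsupp r hrF, hW'supp r fun h => hr (mem_sdiff.2 ⟨h, hrF⟩)]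
  have hcol : ∀ r, -∑ q, W' q r * g r q ≤ ‖fun q => W' q r‖ * G := fun r =>
    calc -∑ q, W' q r * g r q = ∑ q, (-fun q => W' q r) q * g r q := by
          simp only [Pi.neg_apply, neg_mul, sum_neg_distrib]
      _ ≤ ‖fun q => W' q r‖ * ∑ q, |g r q| := by
        simpa only [norm_neg] using sum_mul_le_norm_mul_sum_abs (-fun q => W' q r) (g r)
      _ ≤ ‖fun q => W' q r‖ * G := mul_le_mul_of_nonneg_left (hG r) (norm_nonneg _)
  rw [hsupp] at hconv
  calc _ ≤ ∑ r ∈ Fbar \ F, -∑ q, W' q r * g r q := by rw [sum_neg_distrib]; linarith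
    _ ≤ _ := by rw [sum_mul]; exact sum_le_sum fun r _ => hcol r

lemma exists_trainLoss_update_column_le (hx : ∀ i, ‖x i‖ ≤ 1) (W : Fin k → Fin d → ℝ)
    (j : Fin d) :
    ∃ u : Fin k → ℝ, trainLoss k d m x y (fun q i => W q i + if i = j then u q else 0) ≤
      trainLoss k d m x y W - (∑ q, |gradCol k d (trainLoss k d m x y) W j q|) ^ 2 / 4 := by
  set g := gradCol k d (trainLoss k d m x y) W j
  set G := ∑ q, |g q|
  set u : Fin k → ℝ := fun q => -(G / 2) * SignType.sign (g q)
  set V : Fin k → Fin d → ℝ := fun q i => if i = j then u q else 0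
  have hG : 0 ≤ G := sum_nonneg fun q _ => abs_nonneg _
  have hV : ∀ i q, |(V *ᵥ x i) q| ≤ G / 2 := by
    intro i q
    have hu : |u q| ≤ G / 2 :=
      calc |u q| = G / 2 * |(SignType.sign (g q) : ℝ)| := by
            rw [abs_mul, abs_neg, abs_of_nonneg (div_nonneg hG zero_le_two)]
        _ ≤ G / 2 * 1 := by gcongr; cases SignType.sign (g q) <;> simp
        _ = G / 2 := mul_one _
    have hxj : |x i j| ≤ 1 := (norm_le_pi_norm (x i) j).trans (hx i)
    simpa [V, mulVec, dotProduct, abs_mul] using mul_le_mul hu hxj (abs_nonneg _) (by linarith)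
  have hslope : fderiv ℝ (trainLoss k d m x y) W V = -(G / 2) * G := by
    rw [fderiv_apply_eq_sum_gradCol, sum_eq_single j (fun r _ hr => by simp [V, hr]) (by simp),
      mul_sum]
    exact sum_congr rfl fun q _ => by
      simp only [V, u, if_pos, mul_assoc]
      exact congrArg _ (sign_mul_self (g q))
  have := trainLoss_add_le x y W V hV
  rw [hslope] at this
  exact ⟨u, this.trans_eq (by ring)⟩

end KeyLemma

theorem shareBoost_key_lemma_general
    (k d m : ℕ) (hk : 2 ≤ k)
    (x : Fin m → Fin d → ℝ) (y : Fin m → Fin k)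
    (hx : ∀ i : Fin m, ‖x i‖ ≤ 1)
    (F Fbar : Finset (Fin d))
    (W Wstar : Fin k → Fin d → ℝ)
    (hWsupp : ∀ i ∉ F, ∀ q, W q i = 0)
    (hWmin : ∀ V : Fin k → Fin d → ℝ, (∀ i ∉ F, ∀ q, V q i = 0) →
      trainLoss k d m x y W ≤ trainLoss k d m x y V)
    (hWstarSupp : ∀ i ∉ Fbar, ∀ q, Wstar q i = 0)
    (hLoss : trainLoss k d m x y Wstar < trainLoss k d m x y W)
    (j : Fin d)
    (hj : ∀ i : Fin d, ∑ q : Fin k, |gradCol k d (trainLoss k d m x y) W i q| ≤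
      ∑ q : Fin k, |gradCol k d (trainLoss k d m x y) W j q|) :
    ∃ u : Fin k → ℝ,
      trainLoss k d m x y (fun q i => W q i + if i = j then u q else 0) ≤
        trainLoss k d m x y W -
          (trainLoss k d m x y W - trainLoss k d m x y Wstar) ^ 2 /
            (4 * (∑ i ∈ Fbar \ F, ‖fun q => Wstar q i‖) ^ 2) := by
  have : NeZero k := ⟨by omega⟩
  have hgap := trainLoss_sub_le_sum_norm_mul x y hWsupp hWmin hWstarSupp hj
  obtain ⟨u, hu⟩ := exists_trainLoss_update_column_le x y hx W j
  refine ⟨u, hu.trans (sub_le_sub_left ?_ _)⟩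
  have := sq_div_sq_le_sq_of_le_mul (sub_pos.2 hLoss).le
    (sum_nonneg fun i _ => norm_nonneg _) hgap
  rw [mul_comm, ← div_div]
  linarith

/-- **Lemma 3 (key progress lemma).** If `W` minimizes `L` over support `F`, `W★` minimizes
`L` over support `F̄` with `F̄ \ F ≠ ∅` and `L(W) > L(W★)`, and `j` maximizes the `ℓ₁` norm of
the gradient columns, then some update of column `j` decreases `L` by at least
`(L(W) - L(W★))² / (4 (∑_{i ∈ F̄ \ F} ‖W★_{·,i}‖_∞)²)`. -/
theorem shareBoost_key_lemma
    (k d m : ℕ) (hk : 2 ≤ k) (hd : 1 ≤ d) (hm : 1 ≤ m)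
    (x : Fin m → Fin d → ℝ) (y : Fin m → Fin k)
    (hx : ∀ i : Fin m, ‖x i‖ ≤ 1)
    (F Fbar : Finset (Fin d)) (hFF : (Fbar \ F).Nonempty)
    (W Wstar : Fin k → Fin d → ℝ)
    (hWsupp : ∀ i ∉ F, ∀ q, W q i = 0)
    (hWmin : ∀ V : Fin k → Fin d → ℝ, (∀ i ∉ F, ∀ q, V q i = 0) →
      trainLoss k d m x y W ≤ trainLoss k d m x y V)
    (hWstarSupp : ∀ i ∉ Fbar, ∀ q, Wstar q i = 0)
    (hWstarMin : ∀ V : Fin k → Fin d → ℝ, (∀ i ∉ Fbar, ∀ q, V q i = 0) →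
      trainLoss k d m x y Wstar ≤ trainLoss k d m x y V)
    (hLoss : trainLoss k d m x y Wstar < trainLoss k d m x y W)
    (j : Fin d)
    (hj : ∀ i : Fin d, ∑ q : Fin k, |gradCol k d (trainLoss k d m x y) W i q| ≤
      ∑ q : Fin k, |gradCol k d (trainLoss k d m x y) W j q|) :
    ∃ u : Fin k → ℝ,
      trainLoss k d m x y (fun q i => W q i + if i = j then u q else 0) ≤
        trainLoss k d m x y W -
          (trainLoss k d m x y W - trainLoss k d m x y Wstar) ^ 2 /
            (4 * (∑ i ∈ Fbar \ F, ‖fun q => Wstar q i‖) ^ 2) :=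
  shareBoost_key_lemma_general k d m hk x y hx F Fbar W Wstar hWsupp hWmin hWstarSupp hLoss j hj
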